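/- arXiv:2106.04729 — 4 statements merged into one kernel-verified Lean document; each statement's English description precedes it below -/
import Mathlib

section
/- For any state, feasible action, and realized demands, the next state is again a feasible state; more precisely, a01 ≤ s1', a02 + a12 ≤ s2' ≤ s2 + a02 + a12, and s1' + s2' ≤ M, so in particular s1' and s2' are nonnegative and their sum does not exceed the total number of batteries M. -/
/-- SA-MCD feasibility of the next state: for any feasible state, action and realized
demands, the next state `(s1', s2')` satisfies `a01 ≤ s1'`,
`a02 + a12 ≤ s2' ≤ s2 + a02 + a12` and `s1' + s2' ≤ M`; in particular both components
are nonnegative and their sum does not exceed the total number of batteries `M`. -/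
theorem samcd_next_state_feasible
    (M s1 s2 a01 a02 a12 D1 D2 : ℤ)
    (hM : 0 ≤ M) (hs1 : 0 ≤ s1) (hs2 : 0 ≤ s2)
    (ha01 : 0 ≤ a01) (ha02 : 0 ≤ a02) (ha12 : 0 ≤ a12)
    (hD1 : 0 ≤ D1) (hD2 : 0 ≤ D2)
    (hstate : s1 + s2 ≤ M) (ha12le : a12 ≤ s1) (hact : a01 + a02 ≤ M - s1 - s2)
    (L1 L2 B s1' s2' : ℤ)
    (hL1 : L1 = s1 + a01 - a12 - min (s1 - a12) D1)
    (hL2 : L2 = s2 + a02 + a12 - min s2 D2)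
    (hB : B = min (max 0 (D1 - (s1 - a12))) (max 0 (s2 - D2)))
    (hs1' : s1' = L1 + B) (hs2' : s2' = L2 - B) :
    a01 ≤ s1' ∧ a02 + a12 ≤ s2' ∧ s2' ≤ s2 + a02 + a12 ∧ s1' + s2' ≤ M ∧
      0 ≤ s1' ∧ 0 ≤ s2' := by
  subst hs1' hs2' hL1 hL2 hB
  rcases le_total (s1 - a12) D1 with h1 | h1 <;> rcases le_total s2 D2 with h2 | h2 <;>
    simp [min_eq_left, min_eq_right, h1, h2] <;> omega
end

section
/- Stockout transition probability: if the demands D1 and D2 are independent ℕ-valued random variables with probability mass functions p1 and p2 (formally, the pair (D1, D2) is distributed according to the product PMF p1 ⊗ p2), then the probability that the next state equals (a01, a02 + a12) under the map (D1, D2) ↦ (s1', s2') is (∑_{u ≥ s1 − a12} p1(u)) · (∑_{u ≥ s2} p2(u)). -/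
/-- The product PMF of two PMFs on `ℕ`, giving the joint law of independent demands. -/
noncomputable def demandProdPMF (p1 p2 : PMF ℕ) : PMF (ℕ × ℕ) :=
  p1.bind fun d1 => p2.map fun d2 => (d1, d2)

/-- The SA-MCD transition map sending a realized demand pair to the next state
(natural-number arithmetic, where subtraction is truncated, matching `max 0 ·`). -/
def samcdTransition (s1 s2 a01 a02 a12 : ℕ) : ℕ × ℕ → ℕ × ℕ := fun d =>
  let L1 := s1 + a01 - a12 - min (s1 - a12) d.1
  let L2 := s2 + a02 + a12 - min s2 d.2
  let B := min (d.1 - (s1 - a12)) (s2 - d.2)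
  (L1 + B, L2 - B)

lemma samcd_fiber (s1 s2 a01 a02 a12 : ℕ) (ha12le : a12 ≤ s1) (d1 d2 : ℕ) :
    (a01, a02 + a12) = samcdTransition s1 s2 a01 a02 a12 (d1, d2) ↔
      (s1 - a12 ≤ d1 ∧ s2 ≤ d2) := by
  simp only [samcdTransition, Prod.mk.injEq, eq_comm]
  omega

/-- Stockout transition probability: if the demands are independent with PMFs `p1` and
`p2`, then the probability that the next state equals `(a01, a02 + a12)` is
`(∑_{u ≥ s1 − a12} p1 u) * (∑_{u ≥ s2} p2 u)`. -/
theorem samcd_stockout_transition_prob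
    (M s1 s2 a01 a02 a12 : ℕ)
    (hstate : s1 + s2 ≤ M) (ha12le : a12 ≤ s1) (hact : a01 + a02 ≤ M - s1 - s2)
    (p1 p2 : PMF ℕ) :
    ((demandProdPMF p1 p2).map (samcdTransition s1 s2 a01 a02 a12)) (a01, a02 + a12) =
      (∑' u : ℕ, if s1 - a12 ≤ u then p1 u else 0) *
        (∑' u : ℕ, if s2 ≤ u then p2 u else 0) := by
  rw [demandProdPMF, PMF.map_bind]
  simp only [PMF.map_comp, Function.comp_def]
  rw [PMF.bind_apply]
  have h : ∀ d1 : ℕ,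
      p1 d1 * (p2.map (fun d2 => samcdTransition s1 s2 a01 a02 a12 (d1, d2))) (a01, a02 + a12)
      = (if s1 - a12 ≤ d1 then p1 d1 else 0) * (∑' u : ℕ, if s2 ≤ u then p2 u else 0) := by
    intro d1
    rw [PMF.map_apply]
    by_cases h1 : s1 - a12 ≤ d1
    · simp only [h1, if_true]
      congr 1
      apply tsum_congr
      intro d2
      simp only [samcd_fiber s1 s2 a01 a02 a12 ha12le]
      simp [h1]
    · simp only [h1, if_false, zero_mul]
      convert mul_zero (p1 d1) using 2
      rw [ENNReal.tsum_eq_zero]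
      intro d2
      simp only [samcd_fiber s1 s2 a01 a02 a12 ha12le]
      simp [h1]
  rw [tsum_congr h, ENNReal.tsum_mul_right]
end

section
/- Transition probability to an interior state: suppose the demands D1 and D2 are independent ℕ-valued random variables with probability mass functions p1 and p2, and let j1, j2 be naturals with a01 < j1 ≤ s1 + a01 − a12 and a02 + a12 < j2 ≤ s2 + a02 + a12. Then the probability that the next state equals (j1, j2) is p1(s1 − a12 − (j1 − a01)) · p2(s2 − (j2 − a02 − a12)) + [if s2 ≥ (j1 − a01) + (j2 − a02 − a12) then p1(s1 − a12 + (j1 − a01)) · p2(s2 − (j1 − a01) − (j2 − a02 − a12)) else 0]. -/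
/- The interior state `(j1, j2)` has at most two preimages under the transition map. Either no
level-1 demand is left unmet (`B = 0`), which pins down `D1` and `D2` directly; or the unmet
level-1 demand is served by `B = j1 − a01 > 0` spare level-2 batteries, which requires
`s2 ≥ (j1 − a01) + (j2 − a02 − a12)`. The transition probability is the sum of the product masses
of these two distinct demand pairs. -/

theorem PMF.map_apply_eq_sum_of_preimage {α β : Type*} (p : PMF α) (f : α → β) (y : β)
    (s : Finset α) (hs : f ⁻¹' {y} = s) : p.map f y = ∑ x ∈ s, p x := by
  rw [← toOuterMeasure_apply_finset, ← hs, ← toOuterMeasure_map_apply,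
    toOuterMeasure_apply_singleton]

theorem demandProdPMF_apply (p1 p2 : PMF ℕ) (d : ℕ × ℕ) :
    demandProdPMF p1 p2 d = p1 d.1 * p2 d.2 := by
  rw [demandProdPMF, PMF.bind_apply, tsum_eq_single d.1]
  · rw [PMF.map_apply, tsum_eq_single d.2] <;> simp +contextual [Prod.ext_iff, eq_comm]
  · intro d1 hd1
    simp [PMF.map_apply, Prod.ext_iff, Ne.symm hd1]

theorem samcdTransition_preimage_interior {s1 s2 a01 a02 a12 j1 j2 : ℕ}
    (hj1l : a01 < j1) (hj1u : j1 ≤ s1 + a01 - a12)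
    (hj2l : a02 + a12 < j2) (hj2u : j2 ≤ s2 + a02 + a12) :
    samcdTransition s1 s2 a01 a02 a12 ⁻¹' {(j1, j2)} =
      ↑(if (j1 - a01) + (j2 - a02 - a12) ≤ s2 then
          {(s1 - a12 - (j1 - a01), s2 - (j2 - a02 - a12)),
            (s1 - a12 + (j1 - a01), s2 - (j1 - a01) - (j2 - a02 - a12))}
        else {(s1 - a12 - (j1 - a01), s2 - (j2 - a02 - a12))} : Finset (ℕ × ℕ)) := by
  ext ⟨d1, d2⟩
  split_ifs <;>
    simp only [Set.mem_preimage, Set.mem_singleton_iff, Finset.coe_insert, Finset.coe_singleton,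
      Set.mem_insert_iff, samcdTransition, Prod.mk.injEq] <;>
    omega

theorem samcd_interior_transition_prob_general
    (s1 s2 a01 a02 a12 : ℕ)
    (p1 p2 : PMF ℕ) (j1 j2 : ℕ)
    (hj1l : a01 < j1) (hj1u : j1 ≤ s1 + a01 - a12)
    (hj2l : a02 + a12 < j2) (hj2u : j2 ≤ s2 + a02 + a12) :
    ((demandProdPMF p1 p2).map (samcdTransition s1 s2 a01 a02 a12)) (j1, j2) =
      p1 (s1 - a12 - (j1 - a01)) * p2 (s2 - (j2 - a02 - a12)) +
        (if (j1 - a01) + (j2 - a02 - a12) ≤ s2 then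
          p1 (s1 - a12 + (j1 - a01)) * p2 (s2 - (j1 - a01) - (j2 - a02 - a12))
        else 0) := by
  rw [PMF.map_apply_eq_sum_of_preimage _ _ _ _
    (samcdTransition_preimage_interior hj1l hj1u hj2l hj2u)]
  split_ifs
  · have hne : (s1 - a12 - (j1 - a01), s2 - (j2 - a02 - a12)) ≠
        (s1 - a12 + (j1 - a01), s2 - (j1 - a01) - (j2 - a02 - a12)) := by
      simp only [ne_eq, Prod.mk.injEq]
      omega
    rw [Finset.sum_pair hne, demandProdPMF_apply, demandProdPMF_apply]
  · rw [Finset.sum_singleton, demandProdPMF_apply, add_zero]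

/-- Transition probability to an interior state `(j1, j2)` with
`a01 < j1 ≤ s1 + a01 − a12` and `a02 + a12 < j2 ≤ s2 + a02 + a12`: it equals
`p1 (s1 − a12 − (j1 − a01)) * p2 (s2 − (j2 − a02 − a12))` plus, when
`s2 ≥ (j1 − a01) + (j2 − a02 − a12)`, the term
`p1 (s1 − a12 + (j1 − a01)) * p2 (s2 − (j1 − a01) − (j2 − a02 − a12))`. -/
theorem samcd_interior_transition_prob
    (M s1 s2 a01 a02 a12 : ℕ)
    (hstate : s1 + s2 ≤ M) (ha12le : a12 ≤ s1) (hact : a01 + a02 ≤ M - s1 - s2)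
    (p1 p2 : PMF ℕ) (j1 j2 : ℕ)
    (hj1l : a01 < j1) (hj1u : j1 ≤ s1 + a01 - a12)
    (hj2l : a02 + a12 < j2) (hj2u : j2 ≤ s2 + a02 + a12) :
    ((demandProdPMF p1 p2).map (samcdTransition s1 s2 a01 a02 a12)) (j1, j2) =
      p1 (s1 - a12 - (j1 - a01)) * p2 (s2 - (j2 - a02 - a12)) +
        (if (j1 - a01) + (j2 - a02 - a12) ≤ s2 then
          p1 (s1 - a12 + (j1 - a01)) * p2 (s2 - (j1 - a01) - (j2 - a02 - a12))
        else 0) :=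
  samcd_interior_transition_prob_general s1 s2 a01 a02 a12 p1 p2 j1 j2 hj1l hj1u hj2l hj2u
end

section
/- Preimage characterization for boundary states with exhausted level-1 stock: let j2 be an integer with a02 + a12 < j2 ≤ s2 + a02 + a12. Then the next state equals (a01, j2) if and only if D1 = s1 − a12 and D2 = s2 − (j2 − a02 − a12); in particular, such a target state has a unique demand preimage. -/
/-- Preimage characterization for boundary states with exhausted level-1 stock: for
`a02 + a12 < j2 ≤ s2 + a02 + a12`, the next state equals `(a01, j2)` iff
`D1 = s1 − a12` and `D2 = s2 − (j2 − a02 − a12)`; in particular, such a target state has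
a unique demand preimage. -/
theorem samcd_boundary_level1_exhausted_preimage
    (M s1 s2 a01 a02 a12 D1 D2 : ℤ)
    (hM : 0 ≤ M) (hs1 : 0 ≤ s1) (hs2 : 0 ≤ s2)
    (ha01 : 0 ≤ a01) (ha02 : 0 ≤ a02) (ha12 : 0 ≤ a12)
    (hD1 : 0 ≤ D1) (hD2 : 0 ≤ D2)
    (hstate : s1 + s2 ≤ M) (ha12le : a12 ≤ s1) (hact : a01 + a02 ≤ M - s1 - s2)
    (L1 L2 B s1' s2' : ℤ)
    (hL1 : L1 = s1 + a01 - a12 - min (s1 - a12) D1)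
    (hL2 : L2 = s2 + a02 + a12 - min s2 D2)
    (hB : B = min (max 0 (D1 - (s1 - a12))) (max 0 (s2 - D2)))
    (hs1' : s1' = L1 + B) (hs2' : s2' = L2 - B)
    (j2 : ℤ) (hj2l : a02 + a12 < j2) (hj2u : j2 ≤ s2 + a02 + a12) :
    (s1' = a01 ∧ s2' = j2) ↔ (D1 = s1 - a12 ∧ D2 = s2 - (j2 - a02 - a12)) := by
  subst hL1 hL2 hB hs1' hs2'; constructor <;> intro h <;> [skip; skip] <;> omega
end
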